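/- arXiv:1208.2900 — 5 statements merged into one kernel-verified Lean document; each statement's English description precedes it below -/
import Mathlib

section
/- Let M₁, M₂, N₁, N₂ be positive integers with M₁ ≥ M₂ ≥ N₁ ≥ N₂, 3N₂ < M₁+M₂ < 2N₁+N₂. Consider nonnegative integers K₁,K₂,K₃,G₁,G₂,G₃,L₁,L₂,L₃,J₁,J₂,J₃ subject to: K₁+K₂+2K₃+G₁+G₂ = 2N₂-J₃; L₁+L₂+2J₃+J₁+J₂ = 2N₁-K₃; K₂ ≤ K₁ ≤ M₁-N₁; G₂ ≤ G₁ ≤ M₂-N₁; J₂ ≤ J₁ ≤ M₂-N₂; L₂ ≤ L₁ ≤ M₁-N₂; G₃ = K₃ ≤ N₁; L₃ = J₃ ≤ N₂. Then the maximum of K₁+K₂+2K₃+G₁+G₂+L₁+L₂+2J₃+J₁+J₂ over all such tuples equals M₁+M₂+N₂. -/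
/-- The integer linear program of Case A has optimum value `M₁+M₂+N₂`. -/
theorem caseA_ILP_optimum (M₁ M₂ N₁ N₂ : ℤ)
    (hM₁ : 0 < M₁) (hM₂ : 0 < M₂) (hN₁ : 0 < N₁) (hN₂ : 0 < N₂)
    (h₁ : M₂ ≤ M₁) (h₂ : N₁ ≤ M₂) (h₃ : N₂ ≤ N₁)
    (h₄ : 3 * N₂ < M₁ + M₂) (h₅ : M₁ + M₂ < 2 * N₁ + N₂) :
    IsGreatest { D : ℤ | ∃ K₁ K₂ K₃ G₁ G₂ G₃ L₁ L₂ L₃ J₁ J₂ J₃ : ℤ,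
      0 ≤ K₁ ∧ 0 ≤ K₂ ∧ 0 ≤ K₃ ∧ 0 ≤ G₁ ∧ 0 ≤ G₂ ∧ 0 ≤ G₃ ∧
      0 ≤ L₁ ∧ 0 ≤ L₂ ∧ 0 ≤ L₃ ∧ 0 ≤ J₁ ∧ 0 ≤ J₂ ∧ 0 ≤ J₃ ∧
      K₁ + K₂ + 2 * K₃ + G₁ + G₂ = 2 * N₂ - J₃ ∧
      L₁ + L₂ + 2 * J₃ + J₁ + J₂ = 2 * N₁ - K₃ ∧
      K₂ ≤ K₁ ∧ K₁ ≤ M₁ - N₁ ∧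
      G₂ ≤ G₁ ∧ G₁ ≤ M₂ - N₁ ∧
      J₂ ≤ J₁ ∧ J₁ ≤ M₂ - N₂ ∧
      L₂ ≤ L₁ ∧ L₁ ≤ M₁ - N₂ ∧
      G₃ = K₃ ∧ K₃ ≤ N₁ ∧ L₃ = J₃ ∧ J₃ ≤ N₂ ∧
      D = K₁ + K₂ + 2 * K₃ + G₁ + G₂ + L₁ + L₂ + 2 * J₃ + J₁ + J₂ }
    (M₁ + M₂ + N₂) := by
  constructor
  · exact ⟨M₁ - N₁, M₁ - N₁, 2*N₁ + N₂ - M₁ - M₂, M₂ - N₁, M₂ - N₁,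
      2*N₁ + N₂ - M₁ - M₂, (M₁ - M₂ + N₂) - (M₁ - M₂ + N₂)/2, (M₁ - M₂ + N₂)/2, 0,
      M₂ - N₂, M₂ - N₂, 0, by omega⟩
  · rintro D ⟨K₁, K₂, K₃, G₁, G₂, G₃, L₁, L₂, L₃, J₁, J₂, J₃, h⟩
    omega
end

section
/- Let M₁, M₂, N₁, N₂ be positive integers with M₁ ≥ M₂ ≥ N₁ ≥ N₂, M₁+M₂ ≤ 3N₂, N₁ ≥ 2, and suppose it is not the case that M₁+M₂ = 3N₂ = 2N₁+N₂. Set x = 3N₂-M₁-M₂. Then 2(2M₂-M₁) ≥ 2 and hence M₂+N₂-M₁-⌈(x-1)/3⌉ > 0; moreover M₂+N₂-M₁-⌊x/3⌋ > 0; and 2(M₁-N₂)+⌊2x/3⌋ > 0. -/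
lemma myfloor (a : ℤ) : ⌊((a : ℚ)) / 3⌋ = a / 3 := by
  have := Rat.floor_intCast_div_natCast a 3
  simpa using this

lemma myceil (a : ℤ) : ⌈((a : ℚ)) / 3⌉ = -((-a) / 3) := by
  have h := Int.floor_neg (a := (a:ℚ)/3)
  have h2 : -((a:ℚ)/3) = ((-a:ℤ):ℚ)/3 := by push_cast; ring
  rw [h2, myfloor] at h
  omega

/-- Positivity of the message block lengths in Case C. -/
theorem caseC_block_positivity (M₁ M₂ N₁ N₂ : ℤ)
    (hM₁ : 0 < M₁) (hM₂ : 0 < M₂) (hN₁ : 0 < N₁) (hN₂ : 0 < N₂)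
    (h₁ : M₂ ≤ M₁) (h₂ : N₁ ≤ M₂) (h₃ : N₂ ≤ N₁)
    (h₄ : M₁ + M₂ ≤ 3 * N₂) (h₅ : 2 ≤ N₁)
    (h₆ : ¬(M₁ + M₂ = 3 * N₂ ∧ 3 * N₂ = 2 * N₁ + N₂))
    (x : ℤ) (hx : x = 3 * N₂ - M₁ - M₂) :
    2 ≤ 2 * (2 * M₂ - M₁) ∧
    0 < M₂ + N₂ - M₁ - ⌈((x : ℚ) - 1) / 3⌉ ∧
    0 < M₂ + N₂ - M₁ - ⌊((x : ℚ)) / 3⌋ ∧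
    0 < 2 * (M₁ - N₂) + ⌊((2 * x : ℤ) : ℚ) / 3⌋ := by
  have e1 : ((x : ℚ) - 1) = ((x - 1 : ℤ) : ℚ) := by push_cast; ring
  rw [e1, myceil, myfloor, myfloor]
  omega
end

section
/- Let M₁, M₂, N₁, N₂ be positive integers with M₁ ≥ M₂ ≥ N₁ ≥ N₂ and M₁+M₂ ≤ 3N₂, and set x = 3N₂-M₁-M₂, K₃ = 2(N₁-N₂)+⌊2x/3⌋, L₃ = ⌊2x/3⌋, G₃ = 2N₁+N₂-M₁-M₂-⌊x/3⌋, J₃ = 3N₂-M₁-M₂-⌈(x-1)/3⌉. Then G₃+J₃ = 2(N₁+2N₂-M₁-M₂) - L₃, K₃ ≤ G₃ ≤ N₁, and L₃ ≤ J₃ ≤ N₂. -/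
/-- Verification of the constraint system in Theorem 3 (Case C). -/
theorem caseC_constraints (M₁ M₂ N₁ N₂ : ℤ)
    (hM₁ : 0 < M₁) (hM₂ : 0 < M₂) (hN₁ : 0 < N₁) (hN₂ : 0 < N₂)
    (h₁ : M₂ ≤ M₁) (h₂ : N₁ ≤ M₂) (h₃ : N₂ ≤ N₁)
    (h₄ : M₁ + M₂ ≤ 3 * N₂)
    (x K₃ L₃ G₃ J₃ : ℤ)
    (hx : x = 3 * N₂ - M₁ - M₂)
    (hK₃ : K₃ = 2 * (N₁ - N₂) + ⌊((2 * x : ℤ) : ℚ) / 3⌋)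
    (hL₃ : L₃ = ⌊((2 * x : ℤ) : ℚ) / 3⌋)
    (hG₃ : G₃ = 2 * N₁ + N₂ - M₁ - M₂ - ⌊((x : ℚ)) / 3⌋)
    (hJ₃ : J₃ = 3 * N₂ - M₁ - M₂ - ⌈((x : ℚ) - 1) / 3⌉) :
    G₃ + J₃ = 2 * (N₁ + 2 * N₂ - M₁ - M₂) - L₃ ∧
    K₃ ≤ G₃ ∧ G₃ ≤ N₁ ∧ L₃ ≤ J₃ ∧ J₃ ≤ N₂ := by
  have h3 : ((3:ℚ)) = ((3:ℕ):ℚ) := by norm_num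
  have e1 : ⌊((2 * x : ℤ) : ℚ) / 3⌋ = (2*x) / 3 := by
    rw [h3, Rat.floor_intCast_div_natCast]; norm_num
  have e2 : ⌊((x : ℚ)) / 3⌋ = x / 3 := by
    rw [h3, Rat.floor_intCast_div_natCast]; norm_num
  have e3 : ⌈((x : ℚ) - 1) / 3⌉ = -((-(x-1)) / 3) := by
    rw [show ((x:ℚ)-1)/3 = -((((-(x-1)):ℤ):ℚ)/3) by push_cast; ring,
      Int.ceil_neg, h3, Rat.floor_intCast_div_natCast]; norm_num
  rw [e1] at hK₃ hL₃; rw [e2] at hG₃; rw [e3] at hJ₃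
  omega
end

section
/- Let M₁, M₂, N₁, N₂ be positive integers with M₁ ≥ M₂ ≥ N₁ ≥ N₂ and 3N₂ ≥ M₁+M₂, and consider nonnegative integers L₃, K₃ satisfying 2L₃ + K₃ ≤ 2(N₁+2N₂-M₁-M₂) and 2K₃ + L₃ ≤ 2(2N₁+N₂-M₁-M₂). Then, with x = 3N₂-M₁-M₂, the choice L₃ = ⌊2x/3⌋, K₃ = 2(N₁-N₂)+⌊2x/3⌋ is feasible, and K₃ = min(2(N₁-N₂)+L₃, 2(N₁+2N₂-M₁-M₂)-2L₃) is maximized at L₃ = ⌊2x/3⌋. -/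
/-- The two-variable integer optimization of Case C: `L₃ = ⌊2x/3⌋` is feasible and
maximizes `min(2(N₁-N₂)+L₃, 2(N₁+2N₂-M₁-M₂)-2L₃)`. -/
theorem caseC_two_var_optimization (M₁ M₂ N₁ N₂ : ℤ)
    (hM₁ : 0 < M₁) (hM₂ : 0 < M₂) (hN₁ : 0 < N₁) (hN₂ : 0 < N₂)
    (h₁ : M₂ ≤ M₁) (h₂ : N₁ ≤ M₂) (h₃ : N₂ ≤ N₁)
    (h₄ : M₁ + M₂ ≤ 3 * N₂)
    (x L K : ℤ)
    (hx : x = 3 * N₂ - M₁ - M₂)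
    (hL : L = ⌊((2 * x : ℤ) : ℚ) / 3⌋)
    (hK : K = 2 * (N₁ - N₂) + L) :
    (0 ≤ L ∧ 0 ≤ K ∧
      2 * L + K ≤ 2 * (N₁ + 2 * N₂ - M₁ - M₂) ∧
      2 * K + L ≤ 2 * (2 * N₁ + N₂ - M₁ - M₂)) ∧
    ∀ L₃ : ℤ, 0 ≤ L₃ →
      min (2 * (N₁ - N₂) + L₃) (2 * (N₁ + 2 * N₂ - M₁ - M₂) - 2 * L₃) ≤
      min (2 * (N₁ - N₂) + L) (2 * (N₁ + 2 * N₂ - M₁ - M₂) - 2 * L) := by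
  have hL' : L = (2 * x) / 3 := by
    rw [hL]
    have : ((2 * x : ℤ) : ℚ) / 3 = ((2 * x : ℤ) : ℚ) / ((3 : ℕ) : ℚ) := by norm_num
    rw [this, Rat.floor_intCast_div_natCast]
    norm_num
  constructor
  · refine ⟨by omega, by omega, by omega, by omega⟩
  · intro L₃ hL₃
    have hmin : min (2 * (N₁ - N₂) + L) (2 * (N₁ + 2 * N₂ - M₁ - M₂) - 2 * L) =
        2 * (N₁ - N₂) + L := min_eq_left (by omega)
    rw [hmin]
    rcases le_or_gt L₃ L with h | h
    · exact le_trans (min_le_left _ _) (by omega)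
    · exact le_trans (min_le_right _ _) (by omega)
end

section
/- Let M₁, M₂, N₁, N₂ be positive integers with N₁ ≥ N₂ ≥ M₁ ≥ M₂ and N₁+N₂ ≤ 3M₂, and set x′ = 3M₂-N₁-N₂. Then (2(N₁-M₂)+⌊2x′/3⌋) + (N₂+M₂-N₁-⌈(x′-1)/3⌉) ≤ 2M₁ and (2(N₁-M₂)+⌊2x′/3⌋) + (N₂+M₂-N₁-⌊x′/3⌋) ≤ 2M₂. -/
/-- Transmitter dimension constraints in Theorem 5 (Case C′). -/
theorem caseC'_transmitter_constraints (M₁ M₂ N₁ N₂ : ℤ)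
    (hM₁ : 0 < M₁) (hM₂ : 0 < M₂) (hN₁ : 0 < N₁) (hN₂ : 0 < N₂)
    (h₁ : N₂ ≤ N₁) (h₂ : M₁ ≤ N₂) (h₃ : M₂ ≤ M₁)
    (h₄ : N₁ + N₂ ≤ 3 * M₂)
    (x' : ℤ) (hx' : x' = 3 * M₂ - N₁ - N₂) :
    (2 * (N₁ - M₂) + ⌊((2 * x' : ℤ) : ℚ) / 3⌋) +
      (N₂ + M₂ - N₁ - ⌈((x' : ℚ) - 1) / 3⌉) ≤ 2 * M₁ ∧
    (2 * (N₁ - M₂) + ⌊((2 * x' : ℤ) : ℚ) / 3⌋) +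
      (N₂ + M₂ - N₁ - ⌊((x' : ℚ)) / 3⌋) ≤ 2 * M₂ := by
  have hf1 : ⌊((2 * x' : ℤ) : ℚ) / 3⌋ = (2 * x') / 3 := by
    rw [show ((3:ℚ)) = ((3:ℕ):ℚ) by norm_num]
    exact Rat.floor_intCast_div_natCast _ _
  have hf2 : ⌊((x' : ℚ)) / 3⌋ = x' / 3 := by
    rw [show ((3:ℚ)) = ((3:ℕ):ℚ) by norm_num]
    exact Rat.floor_intCast_div_natCast _ _
  have hc : ⌈((x' : ℚ) - 1) / 3⌉ = -((-(x' - 1)) / 3) := by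
    rw [show ((x':ℚ)-1)/3 = -((((-(x'-1)):ℤ):ℚ)/((3:ℕ):ℚ)) by push_cast; ring,
      Int.ceil_neg, Rat.floor_intCast_div_natCast]
    norm_num
  rw [hf1, hf2, hc]
  omega
end
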